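/- Let Y be a nonzero Hermitian eigenmatrix of M with eigenvalue α and tr(Y) = 0. Then α is real and satisfies 1 - α = [∫ Ψ (G*YG)²/(G*Λ_∘G)²] / tr[(Λ_∘^{-1/4} Y Λ_∘^{-1/4})²]. In particular α ≤ 1, with α = 1 if and only if G*YG ≡ 0 on the unit circle. -/

import Mathlib

/-! Write `T = Λ^{1/4}`, so that `Λ^{1/2} = T²`. The eigen-equation says `(1 - α) Y = T² J T²`
with `J = ∫ Ψ (G*YG)/(G*ΛG)² · GG*`; conjugating by `T⁻¹` and pairing with `Y` gives
`(1 - α) tr[(T⁻¹YT⁻¹)²] = tr(JY) = ∫ Ψ (G*YG)²/(G*ΛG)²`. The right side is a nonnegative real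
integral and the trace is the squared Frobenius norm of the nonzero Hermitian matrix `T⁻¹YT⁻¹`,
so `1 - α` is a nonnegative real, and it vanishes exactly when the continuous nonnegative
integrand vanishes on a period, i.e. when `G*YG ≡ 0`. -/

open Matrix MeasureTheory Real Filter
open scoped ComplexOrder

noncomputable section

abbrev Mat (n : ℕ) := Matrix (Fin n) (Fin n) ℂ
abbrev Vec (n : ℕ) := Matrix (Fin n) (Fin 1) ℂ

/-- the point e^{jθ} on the unit circle -/
def circPt (θ : ℝ) : ℂ := Complex.exp (θ * Complex.I)

/-- G(e^{jθ}) = (e^{jθ} I - A)⁻¹ B -/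
def Gm {n : ℕ} (A : Mat n) (B : Vec n) (θ : ℝ) : Vec n :=
  (circPt θ • (1 : Mat n) - A)⁻¹ * B

/-- the scalar G* Λ G at e^{jθ} -/
def quad {n : ℕ} (A : Mat n) (B : Vec n) (Λ : Mat n) (θ : ℝ) : ℂ :=
  ((Gm A B θ)ᴴ * Λ * Gm A B θ) 0 0

/-- normalized entrywise matrix integral over the unit circle -/
def mInt {n : ℕ} (f : ℝ → Mat n) : Mat n :=
  Matrix.of fun i j => (1 / (2 * π) : ℝ) • ∫ θ in (0:ℝ)..(2 * π), f θ i j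

/-- normalized scalar (complex) integral over the unit circle -/
def sInt (f : ℝ → ℂ) : ℂ := (1 / (2 * π) : ℝ) • ∫ θ in (0:ℝ)..(2 * π), f θ

/-- normalized scalar (real) integral over the unit circle -/
def sIntR (f : ℝ → ℝ) : ℝ := (1 / (2 * π)) * ∫ θ in (0:ℝ)..(2 * π), f θ

/-- all eigenvalues of A lie in the open unit disc -/
def IsStable {n : ℕ} (A : Mat n) : Prop := ∀ μ ∈ spectrum ℂ A, ‖μ‖ < 1

/-- (A,B) is a reachable pair: the controllability matrix has full rank -/
def Reachable {n : ℕ} (A : Mat n) (B : Vec n) : Prop :=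
  (Matrix.of fun (i : Fin n) (k : Fin n) => (A ^ (k : ℕ) * B) i 0).rank = n

/-- the old Mathlib `Matrix.PosSemidef.sqrt` (removed since), with its old definition -/
def psdSqrt {n : ℕ} {M : Mat n} (hM : M.PosSemidef) : Mat n :=
  hM.1.eigenvectorUnitary.1 * diagonal ((↑) ∘ (√·) ∘ hM.1.eigenvalues) *
  (star hM.1.eigenvectorUnitary : Mat n)

open scoped Classical in
/-- positive semidefinite square root (junk value 0 off the psd cone) -/
def msqrt {n : ℕ} (M : Mat n) : Mat n :=
  if h : M.PosSemidef then psdSqrt h else 0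

/-- the moment map ∫ G (Ψ/(G*ΛG)) G* -/
def moment {n : ℕ} (A : Mat n) (B : Vec n) (Ψ : ℝ → ℝ) (Λ : Mat n) : Mat n :=
  mInt (fun θ => ((Ψ θ : ℂ) / quad A B Λ θ) • (Gm A B θ * (Gm A B θ)ᴴ))

/-- the iteration map Θ(Λ) = ∫ Λ^{1/2} G (Ψ/(G*ΛG)) G* Λ^{1/2} -/
def Theta {n : ℕ} (A : Mat n) (B : Vec n) (Ψ : ℝ → ℝ) (Λ : Mat n) : Mat n :=
  mInt (fun θ => ((Ψ θ : ℂ) / quad A B Λ θ) •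
    (msqrt Λ * (Gm A B θ * (Gm A B θ)ᴴ) * msqrt Λ))

/-- the linearization M of Θ at Λ:
M(X) = X - Λ^{1/2} ∫ (GΨG*/(G*ΛG)) (G*XG/(G*ΛG)) Λ^{1/2} -/
def Mlin {n : ℕ} (A : Mat n) (B : Vec n) (Ψ : ℝ → ℝ) (Λ : Mat n) (X : Mat n) : Mat n :=
  X - msqrt Λ * mInt (fun θ =>
    (((Ψ θ : ℂ) * (((Gm A B θ)ᴴ * X * Gm A B θ) 0 0)) / (quad A B Λ θ) ^ 2) •
      (Gm A B θ * (Gm A B θ)ᴴ)) * msqrt Λ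

/-- the range of the operator Γ : Φ ↦ ∫ G Φ G* on continuous (2π-periodic) functions -/
def RangeGamma {n : ℕ} (A : Mat n) (B : Vec n) : Set (Mat n) :=
  {M | ∃ Φ : ℝ → ℝ, Continuous Φ ∧ (∀ θ, Φ (θ + 2 * π) = Φ θ) ∧
    M = mInt (fun θ => (Φ θ : ℂ) • (Gm A B θ * (Gm A B θ)ᴴ))}

namespace Matrix

variable {n : Type*} [Fintype n] [DecidableEq n]

theorem mul_trace_sq_inv_mul_mul_inv_of_smul_eq {R : Type*} [CommRing R] {T Y J : Matrix n n R}
    {β : R} (hT : IsUnit T) (h : β • Y = T * T * J * (T * T)) :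
    β * ((T⁻¹ * Y * T⁻¹) ^ 2).trace = (J * Y).trace := by
  have hdet : IsUnit T.det := (isUnit_iff_isUnit_det T).mp hT
  set Z := T⁻¹ * Y * T⁻¹
  have hZ : T * Z * T = Y := by
    simp only [Z, Matrix.mul_assoc, mul_nonsing_inv_cancel_left _ _ hdet,
      nonsing_inv_mul _ hdet, Matrix.mul_one]
  have hβZ : β • Z = T * J * T := by
    rw [show β • Z = T⁻¹ * (β • Y) * T⁻¹ by simp only [Z, Matrix.mul_smul, Matrix.smul_mul], h]
    simp only [Matrix.mul_assoc, nonsing_inv_mul_cancel_left _ _ hdet, mul_nonsing_inv _ hdet,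
      Matrix.mul_one]
  calc β * (Z ^ 2).trace = (Z * (β • Z)).trace := by
        rw [sq, mul_smul_comm, trace_smul, smul_eq_mul]
    _ = (T * Z * T * J).trace := by
        rw [hβZ, ← Matrix.mul_assoc, ← Matrix.mul_assoc, trace_mul_comm]
        simp only [Matrix.mul_assoc]
    _ = (J * Y).trace := by rw [hZ, trace_mul_comm]

theorem IsHermitian.trace_sq_pos {𝕜 : Type*} [RCLike 𝕜] {H : Matrix n n 𝕜}
    (hH : H.IsHermitian) (h0 : H ≠ 0) : 0 < (H ^ 2).trace := by
  have hsq : H ^ 2 = Hᴴ * H := by rw [hH.eq, sq]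
  rw [hsq]
  exact (posSemidef_conjTranspose_mul_self H).trace_nonneg.lt_of_ne'
    (trace_conjTranspose_mul_self_eq_zero_iff.not.mpr h0)

theorem trace_sq_inv_mul_mul_inv_pos {𝕜 : Type*} [RCLike 𝕜] {T Y : Matrix n n 𝕜}
    (hT : T.IsHermitian) (hTu : IsUnit T) (hY : Y.IsHermitian) (hY0 : Y ≠ 0) :
    0 < ((T⁻¹ * Y * T⁻¹) ^ 2).trace := by
  have hTinvu : IsUnit T⁻¹ := isUnit_nonsing_inv_iff.mpr hTu
  refine IsHermitian.trace_sq_pos ?_ ?_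
  · simpa only [hT.inv.eq] using isHermitian_conjTranspose_mul_mul T⁻¹ hY
  · rwa [Ne, hTinvu.mul_left_eq_zero, hTinvu.mul_right_eq_zero]

end Matrix

theorem Function.Periodic.forall_iff_forall_mem_Icc {α β : Type*} [AddCommGroup β] [LinearOrder β]
    [IsOrderedAddMonoid β] [Archimedean β] {f : β → α} {c : β} (hf : Function.Periodic f c)
    (hc : 0 < c) {p : α → Prop} : (∀ x, p (f x)) ↔ ∀ x ∈ Set.Icc 0 c, p (f x) := by
  refine ⟨fun h x _ => h x, fun h x => ?_⟩
  obtain ⟨y, hy, hxy⟩ := hf.exists_mem_Ico₀ hc x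
  rw [hxy]
  exact h y (Set.Ico_subset_Icc_self hy)

section SquareRoot

variable {n : ℕ} {M : Mat n}

theorem msqrt_of_posSemidef (hM : M.PosSemidef) : msqrt M = psdSqrt hM := dif_pos hM

theorem posSemidef_msqrt (hM : M.PosSemidef) : (msqrt M).PosSemidef := by
  rw [msqrt_of_posSemidef hM, psdSqrt]
  have hd : (diagonal ((↑) ∘ (√·) ∘ hM.1.eigenvalues) : Mat n).PosSemidef :=
    PosSemidef.diagonal fun i => Complex.zero_le_real.mpr (Real.sqrt_nonneg _)
  simpa [star_eq_conjTranspose] using hd.mul_mul_conjTranspose_same hM.1.eigenvectorUnitary.1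

theorem msqrt_mul_self (hM : M.PosSemidef) : msqrt M * msqrt M = M := by
  rw [msqrt_of_posSemidef hM, psdSqrt]
  set U : Mat n := hM.1.eigenvectorUnitary.1
  have hU : star U * U = 1 := Unitary.star_mul_self_of_mem hM.1.eigenvectorUnitary.2
  have hsq : diagonal ((↑) ∘ (√·) ∘ hM.1.eigenvalues) * diagonal ((↑) ∘ (√·) ∘ hM.1.eigenvalues)
      = (diagonal (RCLike.ofReal ∘ hM.1.eigenvalues) : Mat n) := by
    rw [diagonal_mul_diagonal]
    congr 1
    funext i
    simp only [Function.comp_apply, ← Complex.ofReal_mul,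
      Real.mul_self_sqrt (hM.eigenvalues_nonneg i)]
    rfl
  calc _ = U * (diagonal ((↑) ∘ (√·) ∘ hM.1.eigenvalues) * (star U * U) *
        diagonal ((↑) ∘ (√·) ∘ hM.1.eigenvalues)) * star U := by
          simp only [Matrix.mul_assoc]
    _ = M := by
      rw [hU, Matrix.mul_one, hsq]
      simpa [Unitary.conjStarAlgAut_apply] using hM.1.spectral_theorem.symm

theorem isUnit_msqrt (hM : M.PosSemidef) (hu : IsUnit M) : IsUnit (msqrt M) := by
  rw [isUnit_iff_isUnit_det] at hu ⊢
  rw [← msqrt_mul_self hM, det_mul] at hu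
  exact isUnit_of_mul_isUnit_left hu

theorem isUnit_msqrt_msqrt (hM : M.PosDef) : IsUnit (msqrt (msqrt M)) :=
  isUnit_msqrt (posSemidef_msqrt hM.posSemidef) (isUnit_msqrt hM.posSemidef hM.isUnit)

end SquareRoot

section CircleIntegral

theorem sInt_ofReal (f : ℝ → ℝ) : sInt (fun θ => (f θ : ℂ)) = sIntR f := by
  rw [sInt, sIntR, intervalIntegral.integral_ofReal, Complex.real_smul, Complex.ofReal_mul]

theorem sIntR_nonneg {f : ℝ → ℝ} (hf : ∀ θ, 0 ≤ f θ) : 0 ≤ sIntR f :=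
  mul_nonneg (by positivity) (intervalIntegral.integral_nonneg (by positivity) fun θ _ => hf θ)

theorem sIntR_eq_zero_iff {f : ℝ → ℝ} (hf : Continuous f) (hf0 : ∀ θ, 0 ≤ f θ) :
    sIntR f = 0 ↔ ∀ θ ∈ Set.Icc 0 (2 * π), f θ = 0 := by
  have hint : sIntR f = 0 ↔ ∫ θ in (0:ℝ)..(2 * π), f θ = 0 := by
    simp only [sIntR, mul_eq_zero, two_pi_pos.ne', one_div, inv_eq_zero, false_or]
  rw [hint, intervalIntegral.integral_eq_zero_iff_of_le_of_nonneg_ae two_pi_pos.le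
    (Eventually.of_forall hf0) (hf.intervalIntegrable _ _),
    Measure.restrict_congr_set Ioc_ae_eq_Icc]
  exact ⟨fun h => Measure.eqOn_Icc_of_ae_eq volume two_pi_pos.ne h hf.continuousOn
    continuousOn_const, fun h => (ae_restrict_iff' measurableSet_Icc).mpr (Eventually.of_forall h)⟩

theorem trace_mInt_mul {n : ℕ} {f : ℝ → Mat n} (Y : Mat n)
    (hf : ∀ i j, IntervalIntegrable (fun θ => f θ i j) volume 0 (2 * π)) :
    (mInt f * Y).trace = sInt fun θ => (f θ * Y).trace := by
  have hrow : ∀ i, IntervalIntegrable (fun θ => ∑ j, f θ i j * Y j i) volume 0 (2 * π) :=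
    fun i => by
      simpa only [Finset.sum_fn] using
        IntervalIntegrable.sum _ fun j _ => (hf i j).mul_const (Y j i)
  simp only [mInt, sInt, trace, diag, mul_apply, of_apply, smul_mul_assoc, ← Finset.smul_sum,
    intervalIntegral.integral_finsetSum fun i _ => hrow i,
    intervalIntegral.integral_finsetSum fun j _ => (hf _ j).mul_const _,
    intervalIntegral.integral_mul_const]

end CircleIntegral

section TransferFunction

variable {n : ℕ} {A : Mat n} {B : Vec n} {Ψ : ℝ → ℝ} {Λ Y : Mat n}

theorem isUnit_circPt_smul_one_sub (hA : IsStable A) (θ : ℝ) :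
    IsUnit (circPt θ • (1 : Mat n) - A) := by
  by_contra h
  have hmem : circPt θ ∈ spectrum ℂ A := by
    rwa [spectrum.mem_iff, Algebra.algebraMap_eq_smul_one]
  simpa [circPt, Complex.norm_exp] using hA _ hmem

theorem continuous_Gm (hA : IsStable A) (B : Vec n) : Continuous (Gm A B) := by
  have hM : Continuous fun θ : ℝ => circPt θ • (1 : Mat n) - A := by
    unfold circPt; fun_prop
  have hdet : ∀ θ, (circPt θ • (1 : Mat n) - A).det ≠ 0 := fun θ =>
    ((isUnit_iff_isUnit_det _).mp (isUnit_circPt_smul_one_sub hA θ)).ne_zero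
  have hinv : Continuous fun θ => (circPt θ • (1 : Mat n) - A)⁻¹ := by
    simp_rw [inv_def, Ring.inverse_eq_inv']
    exact (hM.matrix_det.inv₀ hdet).smul hM.matrix_adjugate
  exact hinv.matrix_mul continuous_const

theorem Gm_periodic (A : Mat n) (B : Vec n) : Function.Periodic (Gm A B) (2 * π) := by
  intro θ
  simp only [Gm, circPt]
  push_cast
  rw [add_mul, Complex.exp_add, Complex.exp_two_pi_mul_I, mul_one]

theorem one_sub_mul_trace_eq_sInt (hA : IsStable A) (hΨc : Continuous Ψ)
    (hq : ∀ θ, quad A B Λ θ ≠ 0) (hΛ : Λ.PosDef) {α : ℂ} (heig : Mlin A B Ψ Λ Y = α • Y) :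
    (1 - α) * (((msqrt (msqrt Λ))⁻¹ * Y * (msqrt (msqrt Λ))⁻¹) ^ 2).trace =
      sInt (fun θ => (Ψ θ : ℂ) * (((Gm A B θ)ᴴ * Y * Gm A B θ) 0 0) ^ 2
        / (quad A B Λ θ) ^ 2) := by
  have hS := posSemidef_msqrt hΛ.posSemidef
  have hGc := continuous_Gm hA B
  set F : ℝ → Mat n := fun θ => ((Ψ θ : ℂ) * (((Gm A B θ)ᴴ * Y * Gm A B θ) 0 0)
    / quad A B Λ θ ^ 2) • (Gm A B θ * (Gm A B θ)ᴴ)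
  have hβ : (1 - α) • Y = msqrt (msqrt Λ) * msqrt (msqrt Λ) * mInt F *
      (msqrt (msqrt Λ) * msqrt (msqrt Λ)) := by
    rw [msqrt_mul_self hS, sub_smul, one_smul, ← heig, Mlin, sub_sub_cancel]
  have hF : Continuous F := by
    have hqc : Continuous (quad A B Λ) := by unfold quad; fun_prop
    have : Continuous fun θ => (Ψ θ : ℂ) * (((Gm A B θ)ᴴ * Y * Gm A B θ) 0 0)
        / quad A B Λ θ ^ 2 :=
      (by fun_prop : Continuous fun θ => (Ψ θ : ℂ) * (((Gm A B θ)ᴴ * Y * Gm A B θ) 0 0)).div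
        (by fun_prop) fun θ => pow_ne_zero 2 (hq θ)
    fun_prop
  rw [mul_trace_sq_inv_mul_mul_inv_of_smul_eq (isUnit_msqrt_msqrt hΛ) hβ,
    trace_mInt_mul Y fun i j => (hF.matrix_elem i j).intervalIntegrable _ _]
  congr 1
  funext θ
  rw [smul_mul_assoc, trace_smul, Matrix.mul_assoc (Gm A B θ), trace_mul_comm (Gm A B θ),
    trace_fin_one, smul_eq_mul]
  ring

theorem ofReal_re_conjTranspose_mul_mul_apply (G : Vec n) {M : Mat n} (hM : M.IsHermitian) :
    (((Gᴴ * M * G) 0 0).re : ℂ) = (Gᴴ * M * G) 0 0 :=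
  (isHermitian_conjTranspose_mul_mul G hM).coe_re_apply_self 0

def weightedSqRatio (A : Mat n) (B : Vec n) (Ψ : ℝ → ℝ) (Λ Y : Mat n) (θ : ℝ) : ℝ :=
  Ψ θ * (((Gm A B θ)ᴴ * Y * Gm A B θ) 0 0).re ^ 2 / (quad A B Λ θ).re ^ 2

theorem sInt_eq_sIntR_weightedSqRatio (hΛ : Λ.IsHermitian) (hY : Y.IsHermitian) :
    sInt (fun θ => (Ψ θ : ℂ) * (((Gm A B θ)ᴴ * Y * Gm A B θ) 0 0) ^ 2 / (quad A B Λ θ) ^ 2) =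
      sIntR (weightedSqRatio A B Ψ Λ Y) := by
  rw [← sInt_ofReal]
  congr 1
  funext θ
  simp only [weightedSqRatio, quad]
  push_cast
  rw [ofReal_re_conjTranspose_mul_mul_apply _ hY, ofReal_re_conjTranspose_mul_mul_apply _ hΛ]

theorem weightedSqRatio_nonneg (hΨ : ∀ θ, 0 ≤ Ψ θ) (θ : ℝ) :
    0 ≤ weightedSqRatio A B Ψ Λ Y θ :=
  div_nonneg (mul_nonneg (hΨ θ) (sq_nonneg _)) (sq_nonneg _)

theorem continuous_weightedSqRatio (hA : IsStable A) (hΨc : Continuous Ψ)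
    (hq : ∀ θ, 0 < (quad A B Λ θ).re) : Continuous (weightedSqRatio A B Ψ Λ Y) := by
  have hGc := continuous_Gm hA B
  have hqc : Continuous (quad A B Λ) := by unfold quad; fun_prop
  exact (by fun_prop : Continuous fun θ => Ψ θ * (((Gm A B θ)ᴴ * Y * Gm A B θ) 0 0).re ^ 2).div
    (by fun_prop) fun θ => pow_ne_zero 2 (hq θ).ne'

theorem weightedSqRatio_eq_zero_iff (hΨpos : ∀ θ, 0 < Ψ θ) (hq : ∀ θ, 0 < (quad A B Λ θ).re)
    (hY : Y.IsHermitian) (θ : ℝ) :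
    weightedSqRatio A B Ψ Λ Y θ = 0 ↔ (Gm A B θ)ᴴ * Y * Gm A B θ = 0 := by
  simp only [weightedSqRatio, div_eq_zero_iff, mul_eq_zero, pow_eq_zero_iff two_ne_zero,
    (hΨpos θ).ne', (hq θ).ne', false_or, or_false, ← Matrix.ext_iff, Fin.forall_fin_one,
    Matrix.zero_apply]
  rw [← Complex.ofReal_eq_zero, ofReal_re_conjTranspose_mul_mul_apply _ hY]

theorem sIntR_weightedSqRatio_eq_zero_iff (hA : IsStable A) (hΨc : Continuous Ψ)
    (hΨpos : ∀ θ, 0 < Ψ θ) (hq : ∀ θ, 0 < (quad A B Λ θ).re) (hY : Y.IsHermitian) :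
    sIntR (weightedSqRatio A B Ψ Λ Y) = 0 ↔ ∀ θ, (Gm A B θ)ᴴ * Y * Gm A B θ = 0 := by
  have hper : Function.Periodic (fun θ => (Gm A B θ)ᴴ * Y * Gm A B θ) (2 * π) := fun θ => by
    simp only [Gm_periodic A B θ]
  rw [sIntR_eq_zero_iff (continuous_weightedSqRatio hA hΨc hq)
      (weightedSqRatio_nonneg fun θ => (hΨpos θ).le)]
  exact (forall₂_congr fun θ _ => weightedSqRatio_eq_zero_iff hΨpos hq hY θ).trans
    (hper.forall_iff_forall_mem_Icc two_pi_pos (p := (· = 0))).symm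

end TransferFunction

theorem stmt14_general {n : ℕ} (A : Mat n) (B : Vec n) (Ψ : ℝ → ℝ) (Λ : Mat n)
    (hA : IsStable A)
    (hΨc : Continuous Ψ) (hΨpos : ∀ θ, 0 < Ψ θ)
    (hΛ : Λ.PosDef)
    (hq : ∀ θ, 0 < (quad A B Λ θ).re)
    (Y : Mat n) (α : ℂ) (hY : Y.IsHermitian) (hY0 : Y ≠ 0)
    (heig : Mlin A B Ψ Λ Y = α • Y) :
    α.im = 0 ∧
    (1 - α) * (((msqrt (msqrt Λ))⁻¹ * Y * (msqrt (msqrt Λ))⁻¹) ^ 2).trace =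
      sInt (fun θ => (Ψ θ : ℂ) * (((Gm A B θ)ᴴ * Y * Gm A B θ) 0 0) ^ 2
        / (quad A B Λ θ) ^ 2) ∧
    α.re ≤ 1 ∧
    (α = 1 ↔ ∀ θ : ℝ, (Gm A B θ)ᴴ * Y * Gm A B θ = 0) := by
  have hkey := one_sub_mul_trace_eq_sInt hA hΨc (fun θ h => (hq θ).ne' (by simp [h])) hΛ heig
  have hc := trace_sq_inv_mul_mul_inv_pos (posSemidef_msqrt (posSemidef_msqrt hΛ.posSemidef)).1
    (isUnit_msqrt_msqrt hΛ) hY hY0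
  have hα := eq_div_of_mul_eq hc.ne' (hkey.trans (sInt_eq_sIntR_weightedSqRatio hΛ.1 hY))
  -- in `ComplexOrder`, `α ≤ 1` says that `α` is real and at most `1`
  have hle : α ≤ 1 := sub_nonneg.mp <| hα ▸ div_nonneg
    (Complex.zero_le_real.mpr (sIntR_nonneg (weightedSqRatio_nonneg fun θ => (hΨpos θ).le))) hc.le
  obtain ⟨hre, him⟩ := Complex.le_def.mp hle
  refine ⟨by simpa using him, hkey, by simpa using hre, ?_⟩
  rw [eq_comm, ← sub_eq_zero, hα, div_eq_zero_iff, or_iff_left hc.ne', Complex.ofReal_eq_zero,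
    sIntR_weightedSqRatio_eq_zero_iff hA hΨc hΨpos hq hY]

/-- eigenvalues of M on traceless eigenmatrices are real, satisfy
(1-α) tr[(Λ^{-1/4} Y Λ^{-1/4})²] = ∫ Ψ (G*YG)²/(G*ΛG)², hence α ≤ 1, with
α = 1 iff G*YG ≡ 0 on the circle. -/
theorem stmt14 {n : ℕ} (A : Mat n) (B : Vec n) (Ψ : ℝ → ℝ) (Λ : Mat n)
    (hA : IsStable A) (hR : Reachable A B)
    (hΨc : Continuous Ψ) (hΨpos : ∀ θ, 0 < Ψ θ)
    (hΛ : Λ.PosDef)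
    (hq : ∀ θ, 0 < (quad A B Λ θ).re)
    (hmom : moment A B Ψ Λ = 1)
    (Y : Mat n) (α : ℂ) (hY : Y.IsHermitian) (hY0 : Y ≠ 0)
    (heig : Mlin A B Ψ Λ Y = α • Y) (htr : Y.trace = 0) :
    α.im = 0 ∧
    (1 - α) * (((msqrt (msqrt Λ))⁻¹ * Y * (msqrt (msqrt Λ))⁻¹) ^ 2).trace =
      sInt (fun θ => (Ψ θ : ℂ) * (((Gm A B θ)ᴴ * Y * Gm A B θ) 0 0) ^ 2
        / (quad A B Λ θ) ^ 2) ∧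
    α.re ≤ 1 ∧
    (α = 1 ↔ ∀ θ : ℝ, (Gm A B θ)ᴴ * Y * Gm A B θ = 0) :=
  stmt14_general A B Ψ Λ hA hΨc hΨpos hΛ hq Y α hY hY0 heig
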